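/- Suppose cos(α+θ) ≠ 0, cos(α+2θ) ≠ 0, cos(α+3θ) ≠ 0, sin(α+3θ) ≠ 0, tan(α+θ) ≠ tan(α+3θ), and additionally |tan(α+θ)·cot(α+3θ)| < 1. Then the fixed point x_FP = ℓ·(tan(α+θ) − tan(α+2θ))/(tan(α+θ) − tan(α+3θ)) of the three-bounce return map is globally attracting: for every initial condition x₀ ∈ ℝ, the orbit x_{n+1} = F(x_n) converges to x_FP as n → ∞. This establishes that the limit-cycle trajectory is robust to perturbations of the impact point on the object. -/

import Mathlib

open Real Filter

/-- The three-bounce return map of the bouncing robot. -/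
noncomputable def bounceMap (ℓ α θ x : ℝ) : ℝ :=
  ((ℓ - x) * Real.tan (π - θ - α) + ℓ * Real.cot (3 * π / 2 - 2 * θ - α)) *
    Real.tan (3 * π / 2 - α - 3 * θ)

/-! The return map is affine, `x ↦ a x + b` with slope `a = tan (α + θ) cot (α + 3θ)`, so the
distance of an orbit to the fixed point `b / (1 - a)` is multiplied by `a` at every step and the
orbit converges geometrically when `|a| < 1`. The fixed point equals the closed form of the
statement because `tan (α + 3θ) cot (α + 3θ) = 1`. -/

section AffineRecurrence

variable {R : Type*} {x : ℕ → R}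

theorem affineRecurrence_sub_eq_pow_mul [CommRing R] {a b p : R} (hp : a * p + b = p)
    (hx : ∀ n, x (n + 1) = a * x n + b) (n : ℕ) : x n - p = a ^ n * (x 0 - p) := by
  induction n with
  | zero => simp
  | succ n ih =>
    calc x (n + 1) - p = a * (x n - p) + (a * p + b - p) := by rw [hx]; ring
      _ = a ^ (n + 1) * (x 0 - p) := by rw [hp, ih]; ring

theorem tendsto_affineRecurrence [NormedField R] {a b : R} (ha : ‖a‖ < 1)
    (hx : ∀ n, x (n + 1) = a * x n + b) : Tendsto x atTop (nhds (b / (1 - a))) := by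
  have h1a : 1 - a ≠ 0 := sub_ne_zero.mpr fun h => by simp [← h] at ha
  have hp : a * (b / (1 - a)) + b = b / (1 - a) := by field_simp; ring
  have hpow := ((tendsto_pow_atTop_nhds_zero_of_norm_lt_one ha).mul_const (x 0 - b / (1 - a))).add_const
    (b / (1 - a))
  rw [zero_mul, zero_add] at hpow
  refine hpow.congr fun n => ?_
  rw [← affineRecurrence_sub_eq_pow_mul hp hx, sub_add_cancel]

end AffineRecurrence

namespace Real

theorem tan_three_pi_div_two_sub (x : ℝ) : tan (3 * π / 2 - x) = cot x := by
  rw [show 3 * π / 2 - x = π / 2 - x + π by ring, tan_add_pi, tan_pi_div_two_sub, tan_inv_eq_cot]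

theorem cot_three_pi_div_two_sub (x : ℝ) : cot (3 * π / 2 - x) = tan x := by
  rw [← tan_inv_eq_cot, tan_three_pi_div_two_sub, cot_inv_eq_tan]

theorem tan_mul_cot {x : ℝ} (hc : cos x ≠ 0) (hs : sin x ≠ 0) : tan x * cot x = 1 := by
  rw [tan_eq_sin_div_cos, cot_eq_cos_div_sin]
  field_simp

end Real

theorem bounceMap_eq_affine (ℓ α θ x : ℝ) :
    bounceMap ℓ α θ x = tan (α + θ) * cot (α + 3 * θ) * x +
      ℓ * (tan (α + 2 * θ) - tan (α + θ)) * cot (α + 3 * θ) := by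
  rw [bounceMap, show π - θ - α = π - (α + θ) by ring, tan_pi_sub,
    show 3 * π / 2 - 2 * θ - α = 3 * π / 2 - (α + 2 * θ) by ring, cot_three_pi_div_two_sub,
    show 3 * π / 2 - α - 3 * θ = 3 * π / 2 - (α + 3 * θ) by ring, tan_three_pi_div_two_sub]
  ring

theorem bounceMap_fixedPoint_eq {ℓ α θ : ℝ} (hc : cos (α + 3 * θ) ≠ 0) (hs : sin (α + 3 * θ) ≠ 0) :
    ℓ * (tan (α + 2 * θ) - tan (α + θ)) * cot (α + 3 * θ) /
        (1 - tan (α + θ) * cot (α + 3 * θ)) =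
      ℓ * (tan (α + θ) - tan (α + 2 * θ)) / (tan (α + θ) - tan (α + 3 * θ)) := by
  have hcot : cot (α + 3 * θ) ≠ 0 := by rw [cot_eq_cos_div_sin]; exact div_ne_zero hc hs
  calc ℓ * (tan (α + 2 * θ) - tan (α + θ)) * cot (α + 3 * θ) /
        (1 - tan (α + θ) * cot (α + 3 * θ))
      = ℓ * (tan (α + 2 * θ) - tan (α + θ)) * cot (α + 3 * θ) /
          ((tan (α + 3 * θ) - tan (α + θ)) * cot (α + 3 * θ)) := by
        rw [← tan_mul_cot hc hs]; ring
    _ = ℓ * (tan (α + θ) - tan (α + 2 * θ)) / (tan (α + θ) - tan (α + 3 * θ)) := by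
        rw [mul_div_mul_right _ _ hcot, ← neg_div_neg_eq]; ring

theorem bounceMap_globally_attracting_general (ℓ α θ : ℝ)
    (h3 : Real.cos (α + 3 * θ) ≠ 0) (h4 : Real.sin (α + 3 * θ) ≠ 0)
    (hJ : |Real.tan (α + θ) * Real.cot (α + 3 * θ)| < 1)
    (x : ℕ → ℝ) (hx : ∀ n : ℕ, x (n + 1) = bounceMap ℓ α θ (x n)) :
    Tendsto x atTop (nhds
      (ℓ * (Real.tan (α + θ) - Real.tan (α + 2 * θ)) /
        (Real.tan (α + θ) - Real.tan (α + 3 * θ)))) := by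
  rw [← bounceMap_fixedPoint_eq h3 h4]
  exact tendsto_affineRecurrence hJ fun n => by rw [hx, bounceMap_eq_affine]

theorem bounceMap_globally_attracting (ℓ α θ : ℝ)
    (h1 : Real.cos (α + θ) ≠ 0) (h2 : Real.cos (α + 2 * θ) ≠ 0)
    (h3 : Real.cos (α + 3 * θ) ≠ 0) (h4 : Real.sin (α + 3 * θ) ≠ 0)
    (h5 : Real.tan (α + θ) ≠ Real.tan (α + 3 * θ))
    (hJ : |Real.tan (α + θ) * Real.cot (α + 3 * θ)| < 1)
    (x : ℕ → ℝ) (hx : ∀ n : ℕ, x (n + 1) = bounceMap ℓ α θ (x n)) :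
    Tendsto x atTop (nhds
      (ℓ * (Real.tan (α + θ) - Real.tan (α + 2 * θ)) /
        (Real.tan (α + θ) - Real.tan (α + 3 * θ)))) :=
  bounceMap_globally_attracting_general ℓ α θ h3 h4 hJ x hx
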